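/- arXiv:1509.01039 — 4 statements merged into one kernel-verified Lean document; each statement's English description precedes it below -/
import Mathlib

section
/- Let R0 be an antiring and R = R0 × R0. Let V be a free R-module with base ε_1,…,ε_n (n ≥ 2), let μ1 = (1,0), μ2 = (0,1) ∈ R, and let π be a nontrivial permutation of {1,…,n}. Define ε_i' = μ1 ε_i + μ2 ε_{π(i)}. Then (ε_1',…,ε_n') is a base of V that is not projectively equal to (ε_1,…,ε_n); in particular V does not have unique base. -/
/-!
Over `R = R₀ × R₀` the scalars `μ₁ = (1,0)` and `μ₂ = (0,1)` are complementary orthogonal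
idempotents, so `x ↦ μ₁ • x + μ₂ • P x` is invertible for every automorphism `P`, with inverse
`x ↦ μ₁ • x + μ₂ • P⁻¹ x`. Applied to the permutation of coordinates by `π`, this shows that the
coordinate map of `ε'` is that of `ε` composed with an automorphism, so `ε'` is a base. On the
other hand `ε'ᵢ = μ₁ • εᵢ + μ₂ • ε_{π i}` has two nonzero coordinates when `π i ≠ i`, while a
multiple `u • εⱼ` has at most one.
-/

/-- The family `ε : ι → V` is a base of the `R`-module `V`: every `x ∈ V` has a unique
presentation as a finite `R`-linear combination of the `ε i`. -/
def IsBaseFam (R : Type*) [CommSemiring R] {V : Type*} [AddCommMonoid V] [Module R V]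
    {ι : Type*} (ε : ι → V) : Prop :=
  ∀ x : V, ∃! c : ι →₀ R, x = c.sum fun i r => r • ε i

section Idempotents

variable {R M : Type*} [CommSemiring R] [AddCommMonoid M] [Module R M] {e f : R}

theorem smul_id_add_smul_comp_smul_id_add_smul (hsum : e + f = 1) (hmul : e * f = 0)
    {P Q : M →ₗ[R] M} (hQP : Q ∘ₗ P = LinearMap.id) :
    (e • LinearMap.id + f • Q) ∘ₗ (e • LinearMap.id + f • P) = LinearMap.id := by
  have he : e * e = e := by
    calc e * e = e * e + e * f := by rw [hmul, add_zero]
      _ = e := by rw [← mul_add, hsum, mul_one]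
  have hf : f * f = f := by
    calc f * f = e * f + f * f := by rw [hmul, zero_add]
      _ = f := by rw [← add_mul, hsum, one_mul]
  have hfe : f * e = 0 := by rw [mul_comm, hmul]
  ext x
  have hQPx : Q (P x) = x := LinearMap.congr_fun hQP x
  simp only [LinearMap.comp_apply, LinearMap.add_apply, LinearMap.smul_apply, LinearMap.id_apply,
    map_add, map_smul, hQPx, smul_add, smul_smul, he, hf, hmul, hfe, zero_smul, add_zero,
    zero_add, ← add_smul, hsum, one_smul]

def LinearEquiv.idempotentMix (hsum : e + f = 1) (hmul : e * f = 0) (P : M ≃ₗ[R] M) :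
    M ≃ₗ[R] M :=
  LinearEquiv.ofLinearMap (e • LinearMap.id + f • P.toLinearMap)
    (e • LinearMap.id + f • P.symm.toLinearMap)
    (smul_id_add_smul_comp_smul_id_add_smul hsum hmul (by ext; simp))
    (smul_id_add_smul_comp_smul_id_add_smul hsum hmul (by ext; simp))

theorem LinearEquiv.idempotentMix_apply (hsum : e + f = 1) (hmul : e * f = 0)
    (P : M ≃ₗ[R] M) (x : M) : LinearEquiv.idempotentMix hsum hmul P x = e • x + f • P x :=
  rfl

end Idempotents

section IsBaseFam

variable {R V ι : Type*} [CommSemiring R] [AddCommMonoid V] [Module R V] {ε : ι → V}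

theorem isBaseFam_iff_bijective :
    IsBaseFam R ε ↔ Function.Bijective (Finsupp.linearCombination R ε) := by
  simp only [IsBaseFam, Function.bijective_iff_existsUnique, Finsupp.linearCombination_apply,
    eq_comm]

theorem IsBaseFam.smul_add_smul_perm {e f : R} (hε : IsBaseFam R ε) (hsum : e + f = 1)
    (hmul : e * f = 0) (π : Equiv.Perm ι) : IsBaseFam R fun i => e • ε i + f • ε (π i) := by
  set L : (ι →₀ R) ≃ₗ[R] (ι →₀ R) := LinearEquiv.idempotentMix hsum hmul (Finsupp.domLCongr π)
  have hcomb : Finsupp.linearCombination R (fun i => e • ε i + f • ε (π i)) =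
      Finsupp.linearCombination R ε ∘ₗ L.toLinearMap := by
    ext i
    simp [L, LinearEquiv.idempotentMix_apply]
  rw [isBaseFam_iff_bijective] at hε ⊢
  rw [hcomb, LinearMap.coe_comp]
  exact hε.comp L.bijective

theorem IsBaseFam.smul_add_smul_ne_smul (hε : IsBaseFam R ε) {i k : ι} (hik : i ≠ k) {a b : R}
    (ha : a ≠ 0) (hb : b ≠ 0) (c : R) (j : ι) : a • ε i + b • ε k ≠ c • ε j := by
  intro h
  have hcoef : Finsupp.single i a + Finsupp.single k b = Finsupp.single j c :=
    (isBaseFam_iff_bijective.mp hε).injective (by simpa using h)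
  have hj : j = i := by
    by_contra hji
    exact ha (by simpa [Finsupp.single_apply, hik.symm, hji] using DFunLike.congr_fun hcoef i)
  subst hj
  exact hb (by simpa [Finsupp.single_apply, hik] using DFunLike.congr_fun hcoef k)

end IsBaseFam

theorem not_unique_base_of_product_general {R₀ : Type*} [CommSemiring R₀] [Nontrivial R₀]
    {V : Type*} [AddCommMonoid V] [Module (R₀ × R₀) V]
    {n : ℕ} (ε : Fin n → V) (hbase : IsBaseFam (R₀ × R₀) ε)
    (π : Equiv.Perm (Fin n)) (hπ : π ≠ 1)
    (ε' : Fin n → V)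
    (hε' : ∀ i, ε' i = ((1 : R₀), (0 : R₀)) • ε i + ((0 : R₀), (1 : R₀)) • ε (π i)) :
    IsBaseFam (R₀ × R₀) ε' ∧
      ¬ ∀ i, ∃ u : (R₀ × R₀)ˣ, ∃ j, ε' i = (u : R₀ × R₀) • ε j := by
  have hsum : ((1 : R₀), (0 : R₀)) + ((0 : R₀), (1 : R₀)) = 1 := by ext <;> simp
  have hmul : ((1 : R₀), (0 : R₀)) * ((0 : R₀), (1 : R₀)) = 0 := by ext <;> simp
  refine ⟨funext hε' ▸ hbase.smul_add_smul_perm hsum hmul π, fun hproj => ?_⟩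
  obtain ⟨i, hi⟩ : ∃ i, π i ≠ i := not_forall.mp fun h => hπ (Equiv.ext h)
  obtain ⟨u, j, hj⟩ := hproj i
  exact hbase.smul_add_smul_ne_smul hi.symm (by simp) (by simp) u j ((hε' i).symm.trans hj)

/-- Over `R = R₀ × R₀` with `R₀` a nontrivial antiring, given a base
`ε₁, …, εₙ` (`n ≥ 2`) of a free `R`-module `V` and a nontrivial permutation `π` of the
indices, the family `ε'ᵢ = μ₁ • εᵢ + μ₂ • ε_{π i}` (with `μ₁ = (1,0)`, `μ₂ = (0,1)`)
is again a base of `V`, but it is not obtained from `ε` by multiplication by units;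
in particular `V` does not have unique base. -/
theorem not_unique_base_of_product {R₀ : Type*} [CommSemiring R₀] [Nontrivial R₀]
    (hadd : ∀ a b : R₀, a + b = 0 → a = 0 ∧ b = 0)
    {V : Type*} [AddCommMonoid V] [Module (R₀ × R₀) V]
    {n : ℕ} (hn : 2 ≤ n) (ε : Fin n → V) (hbase : IsBaseFam (R₀ × R₀) ε)
    (π : Equiv.Perm (Fin n)) (hπ : π ≠ 1)
    (ε' : Fin n → V)
    (hε' : ∀ i, ε' i = ((1 : R₀), (0 : R₀)) • ε i + ((0 : R₀), (1 : R₀)) • ε (π i)) :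
    IsBaseFam (R₀ × R₀) ε' ∧
      ¬ ∀ i, ∃ u : (R₀ × R₀)ˣ, ∃ j, ε' i = (u : R₀ × R₀) • ε j :=
  not_unique_base_of_product_general ε hbase π hπ ε' hε'
end

section
/- Let (V, q) be a quadratic R-module with unique base 𝔅, and let b be a quasiminimal companion of q. For basic submodules W, W' of V with W ∩ W' = {0}, W is disjointly orthogonal to W' if and only if b(W, W') = 0. -/
/-- `B` is a base of the `R`-module `V`. -/
def IsBaseSet (R : Type*) [CommSemiring R] {V : Type*} [AddCommMonoid V] [Module R V]
    (B : Set V) : Prop :=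
  ∀ x : V, ∃! c : B →₀ R, x = c.sum fun b r => r • (b : V)

/-- `q` is quasilinear on `S × T`. -/
def QlinOn {R : Type*} [CommSemiring R] {V : Type*} [AddCommMonoid V] [Module R V]
    (q : V → R) (S T : Set V) : Prop :=
  ∀ x ∈ S, ∀ y ∈ T, q (x + y) = q x + q y

/-- `b` is a quasiminimal companion of `q` with respect to the base `B`:
it is a symmetric bilinear companion of `q` vanishing on every pair of distinct base
vectors on whose spans `q` is quasilinear. -/
def Quasiminimal {R : Type*} [CommSemiring R] {V : Type*} [AddCommMonoid V] [Module R V]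
    (B : Set V) (q : V → R) (b : V →ₗ[R] V →ₗ[R] R) : Prop :=
  (∀ x y, b x y = b y x) ∧ (∀ x y, q (x + y) = q x + q y + b x y) ∧
    ∀ ε ∈ B, ∀ η ∈ B, ε ≠ η →
      QlinOn q (Submodule.span R {ε} : Submodule R V) (Submodule.span R {η} : Submodule R V) →
      b ε η = 0

/-!
Quasilinearity of `q` on `W × W'` restricts to the spans of single base vectors `ε ∈ S`,
`η ∈ S'`; there quasiminimality gives `b ε η = 0` when `ε ≠ η`, while `ε = η` lies in
`W ∩ W' = 0`. Bilinearity spreads the vanishing from the generators to `W × W'`. Conversely, `b(W, W') = 0` turns `q (x + y) = q x + q y + b x y` into quasilinearity.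
-/

open Submodule

theorem LinearMap.apply_eq_zero_of_mem_span {R M N P : Type*} [CommSemiring R]
    [AddCommMonoid M] [AddCommMonoid N] [AddCommMonoid P] [Module R M] [Module R N] [Module R P]
    (f : M →ₗ[R] N →ₗ[R] P) {s : Set M} {t : Set N} (h : ∀ x ∈ s, ∀ y ∈ t, f x y = 0)
    {x : M} {y : N} (hx : x ∈ span R s) (hy : y ∈ span R t) : f x y = 0 := by
  have hgen : span R (Set.image2 (fun m n => f m n) s t) = ⊥ :=
    span_eq_bot.mpr fun _ ⟨x, hx, y, hy, hxy⟩ => hxy ▸ h x hx y hy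
  simpa only [map₂_span_span, hgen, mem_bot] using apply_mem_map₂ f hx hy

section Quadratic

variable {R V : Type*} [CommSemiring R] [AddCommMonoid V] [Module R V]

theorem QlinOn.mono {q : V → R} {S T S₀ T₀ : Set V} (h : QlinOn q S T) (hS : S₀ ⊆ S)
    (hT : T₀ ⊆ T) : QlinOn q S₀ T₀ :=
  fun x hx y hy => h x (hS hx) y (hT hy)

theorem qlinOn_of_apply_eq_zero {q : V → R} {b : V →ₗ[R] V →ₗ[R] R}
    (hpolar : ∀ x y, q (x + y) = q x + q y + b x y) {S T : Set V}
    (h : ∀ x ∈ S, ∀ y ∈ T, b x y = 0) : QlinOn q S T := by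
  intro x hx y hy
  rw [hpolar, h x hx y hy, add_zero]

theorem Quasiminimal.apply_eq_zero_of_qlinOn_span {B : Set V} {q : V → R}
    {b : V →ₗ[R] V →ₗ[R] R} (hqm : Quasiminimal B q b) {S S' : Set V} (hS : S ⊆ B)
    (hS' : S' ⊆ B) (hdisj : span R S ⊓ span R S' = ⊥)
    (hql : QlinOn q (span R S : Set V) (span R S' : Set V)) :
    ∀ ε ∈ S, ∀ η ∈ S', b ε η = 0 := by
  intro ε hε η hη
  by_cases hεη : ε = η
  · subst hεη
    have hzero : ε ∈ span R S ⊓ span R S' := ⟨subset_span hε, subset_span hη⟩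
    rw [hdisj, mem_bot] at hzero
    simp only [hzero, map_zero]
  · exact hqm.2.2 ε (hS hε) η (hS' hη) hεη <|
      hql.mono (span_mono (Set.singleton_subset_iff.mpr hε))
        (span_mono (Set.singleton_subset_iff.mpr hη))

end Quadratic

theorem disjOrth_iff_quasiminimal_zero_general {R : Type*} [CommSemiring R]
    {V : Type*} [AddCommMonoid V] [Module R V]
    (B : Set V)
    (q : V → R)
    (b : V →ₗ[R] V →ₗ[R] R) (hqm : Quasiminimal B q b)
    (S S' : Set V) (hS : S ⊆ B) (hS' : S' ⊆ B)
    (hdisj : Submodule.span R S ⊓ Submodule.span R S' = ⊥) :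
    QlinOn q (Submodule.span R S : Submodule R V) (Submodule.span R S' : Submodule R V) ↔
      ∀ x ∈ Submodule.span R S, ∀ y ∈ Submodule.span R S', b x y = 0 :=
  ⟨fun hql _ hx _ hy =>
      b.apply_eq_zero_of_mem_span (hqm.apply_eq_zero_of_qlinOn_span hS hS' hdisj hql) hx hy,
    qlinOn_of_apply_eq_zero hqm.2.1⟩

/-- For a quadratic module `(V, q)` with unique base `B`, a quasiminimal
companion `b` of `q`, and basic submodules `W = span S`, `W' = span S'` (`S, S' ⊆ B`) with
`W ∩ W' = 0` : `W` is disjointly orthogonal to `W'` iff `b(W, W') = 0`. -/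
theorem disjOrth_iff_quasiminimal_zero {R : Type*} [CommSemiring R]
    {V : Type*} [AddCommMonoid V] [Module R V]
    (B : Set V) (hB : IsBaseSet R B)
    (hub : ∀ B' : Set V, IsBaseSet R B' → ∀ v ∈ B', ∃ u : Rˣ, ∃ w ∈ B, v = (u : R) • w)
    (q : V → R) (hsmul : ∀ (a : R) (x : V), q (a • x) = a * a * q x)
    (b : V →ₗ[R] V →ₗ[R] R) (hqm : Quasiminimal B q b)
    (S S' : Set V) (hS : S ⊆ B) (hS' : S' ⊆ B)
    (hdisj : Submodule.span R S ⊓ Submodule.span R S' = ⊥) :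
    QlinOn q (Submodule.span R S : Submodule R V) (Submodule.span R S' : Submodule R V) ↔
      ∀ x ∈ Submodule.span R S, ∀ y ∈ Submodule.span R S', b x y = 0 :=
  disjOrth_iff_quasiminimal_zero_general B q b hqm S S' hS hS' hdisj
end

section
/- Let γ be a symmetric bilinear form on a free R-module U and (q, b) a balanced quadratic pair on a free R-module V. If B and B' are two expansions of (q, b), then the bilinear forms γ ⊗ B and γ ⊗ B' on U ⊗ V induce the same balanced quadratic pair (q̃, b̃); moreover b̃ = γ ⊗ b and q̃(u ⊗ v) = γ(u,u) q(v) for all u ∈ U, v ∈ V. -/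
/-!
Symmetrising `γ ⊗ B` on pure tensors gives `γ ⊗ (B + Bᵗ) = γ ⊗ b` because `γ` is symmetric, so
`γ ⊗ B` and `γ ⊗ B'` have the same symmetrisation. The diagonal `z ↦ G z z` of a bilinear form is
then determined by its values on a spanning set, since
`G (x + y) (x + y) = G x x + G y y + (G x y + G y x)`; on pure tensors both diagonals equal
`γ(u,u) q(v)`.
-/

open TensorProduct

namespace LinearMap

variable {R M N : Type*} [CommSemiring R] [AddCommMonoid M] [Module R M]
  [AddCommMonoid N] [Module R N]

theorem ext_tmul_tmul {U V : Type*} [AddCommMonoid U] [Module R U] [AddCommMonoid V] [Module R V]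
    {G G' : U ⊗[R] V →ₗ[R] U ⊗[R] V →ₗ[R] N}
    (h : ∀ u₁ u₂ v₁ v₂, G (u₁ ⊗ₜ v₁) (u₂ ⊗ₜ v₂) = G' (u₁ ⊗ₜ v₁) (u₂ ⊗ₜ v₂)) : G = G' :=
  TensorProduct.ext' fun u₁ v₁ => TensorProduct.ext' fun u₂ v₂ => h u₁ u₂ v₁ v₂

theorem apply_add_self (G : M →ₗ[R] M →ₗ[R] N) (x y : M) :
    G (x + y) (x + y) = G x x + G y y + (G + G.flip) x y := by
  simp only [map_add, add_apply, flip_apply]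
  abel

theorem apply_self_eq_of_add_flip_eq {G G' : M →ₗ[R] M →ₗ[R] N}
    (hsym : G + G.flip = G' + G'.flip) {s : Set M} (hs : Submodule.span R s = ⊤)
    (hdiag : ∀ x ∈ s, G x x = G' x x) (z : M) : G z z = G' z z := by
  have hz : z ∈ Submodule.span R s := hs ▸ Submodule.mem_top
  induction hz using Submodule.span_induction with
  | mem x hx => exact hdiag x hx
  | zero => simp
  | add x y _ _ hx hy => rw [apply_add_self, apply_add_self, hx, hy, hsym]
  | smul a x _ hx => simp only [map_smul, smul_apply, hx]

end LinearMap

theorem tmul_add_flip_tmul_of_symm {R U V : Type*} [CommSemiring R]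
    [AddCommMonoid U] [Module R U] [AddCommMonoid V] [Module R V]
    {γ : U →ₗ[R] U →ₗ[R] R} (hγ : ∀ u u', γ u u' = γ u' u) {B : V →ₗ[R] V →ₗ[R] R}
    {G : U ⊗[R] V →ₗ[R] U ⊗[R] V →ₗ[R] R}
    (hG : ∀ u₁ u₂ v₁ v₂, G (u₁ ⊗ₜ v₁) (u₂ ⊗ₜ v₂) = γ u₁ u₂ * B v₁ v₂) (u₁ u₂ : U) (v₁ v₂ : V) :
    G (u₁ ⊗ₜ v₁) (u₂ ⊗ₜ v₂) + G (u₂ ⊗ₜ v₂) (u₁ ⊗ₜ v₁) = γ u₁ u₂ * (B v₁ v₂ + B v₂ v₁) := by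
  rw [hG, hG, hγ u₂ u₁, mul_add]

theorem tensor_expansion_independent_general {R : Type*} [CommSemiring R]
    {U V : Type*} [AddCommMonoid U] [Module R U] [AddCommMonoid V] [Module R V]
    (γ : U →ₗ[R] U →ₗ[R] R) (hγ : ∀ u u', γ u u' = γ u' u)
    (q : V → R) (b : V →ₗ[R] V →ₗ[R] R)
    (B B' : V →ₗ[R] V →ₗ[R] R)
    (hBexp : ∀ x y, B x y + B y x = b x y) (hBq : ∀ x, B x x = q x)
    (hB'exp : ∀ x y, B' x y + B' y x = b x y) (hB'q : ∀ x, B' x x = q x)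
    (G G' : U ⊗[R] V →ₗ[R] U ⊗[R] V →ₗ[R] R)
    (hG : ∀ (u₁ u₂ : U) (v₁ v₂ : V),
      G (u₁ ⊗ₜ[R] v₁) (u₂ ⊗ₜ[R] v₂) = γ u₁ u₂ * B v₁ v₂)
    (hG' : ∀ (u₁ u₂ : U) (v₁ v₂ : V),
      G' (u₁ ⊗ₜ[R] v₁) (u₂ ⊗ₜ[R] v₂) = γ u₁ u₂ * B' v₁ v₂) :
    (∀ z, G z z = G' z z) ∧
    (∀ z w, G z w + G w z = G' z w + G' w z) ∧
    (∀ (u₁ u₂ : U) (v₁ v₂ : V),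
      G (u₁ ⊗ₜ[R] v₁) (u₂ ⊗ₜ[R] v₂) + G (u₂ ⊗ₜ[R] v₂) (u₁ ⊗ₜ[R] v₁) =
        γ u₁ u₂ * b v₁ v₂) ∧
    (∀ (u : U) (v : V), G (u ⊗ₜ[R] v) (u ⊗ₜ[R] v) = γ u u * q v) := by
  have hGsym u₁ u₂ v₁ v₂ := hBexp v₁ v₂ ▸ tmul_add_flip_tmul_of_symm hγ hG u₁ u₂ v₁ v₂
  have hG'sym u₁ u₂ v₁ v₂ := hB'exp v₁ v₂ ▸ tmul_add_flip_tmul_of_symm hγ hG' u₁ u₂ v₁ v₂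
  have hsym : G + G.flip = G' + G'.flip := LinearMap.ext_tmul_tmul fun u₁ u₂ v₁ v₂ => by
    simp only [LinearMap.add_apply, LinearMap.flip_apply, hGsym, hG'sym]
  have hdiag (u : U) (v : V) : G (u ⊗ₜ v) (u ⊗ₜ v) = γ u u * q v := by rw [hG, hBq]
  refine ⟨LinearMap.apply_self_eq_of_add_flip_eq hsym (TensorProduct.span_tmul_eq_top R U V) ?_,
    fun z w => congr($hsym z w), hGsym, hdiag⟩
  rintro _ ⟨u, v, rfl⟩
  rw [hdiag, hG', hB'q]

/-- Let `γ` be a symmetric bilinear form on a free `R`-module `U` and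
`(q, b)` a balanced quadratic pair on a free `R`-module `V`.  If `B` and `B'` are two
expansions of `(q, b)`, then the tensor forms `γ ⊗ B` and `γ ⊗ B'` on `U ⊗ V` induce the
same balanced quadratic pair `(q̃, b̃)`; moreover `b̃ = γ ⊗ b` and
`q̃ (u ⊗ v) = γ(u,u) q(v)`. -/
theorem tensor_expansion_independent {R : Type*} [CommSemiring R]
    {U V : Type*} [AddCommMonoid U] [Module R U] [AddCommMonoid V] [Module R V]
    [Module.Free R U] [Module.Free R V]
    (γ : U →ₗ[R] U →ₗ[R] R) (hγ : ∀ u u', γ u u' = γ u' u)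
    (q : V → R) (b : V →ₗ[R] V →ₗ[R] R)
    (hqsmul : ∀ (a : R) (x : V), q (a • x) = a * a * q x)
    (hbsymm : ∀ x y, b x y = b y x)
    (hcomp : ∀ x y, q (x + y) = q x + q y + b x y)
    (hbal : ∀ x, b x x = 2 * q x)
    (B B' : V →ₗ[R] V →ₗ[R] R)
    (hBexp : ∀ x y, B x y + B y x = b x y) (hBq : ∀ x, B x x = q x)
    (hB'exp : ∀ x y, B' x y + B' y x = b x y) (hB'q : ∀ x, B' x x = q x)
    (G G' : U ⊗[R] V →ₗ[R] U ⊗[R] V →ₗ[R] R)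
    (hG : ∀ (u₁ u₂ : U) (v₁ v₂ : V),
      G (u₁ ⊗ₜ[R] v₁) (u₂ ⊗ₜ[R] v₂) = γ u₁ u₂ * B v₁ v₂)
    (hG' : ∀ (u₁ u₂ : U) (v₁ v₂ : V),
      G' (u₁ ⊗ₜ[R] v₁) (u₂ ⊗ₜ[R] v₂) = γ u₁ u₂ * B' v₁ v₂) :
    (∀ z, G z z = G' z z) ∧
    (∀ z w, G z w + G w z = G' z w + G' w z) ∧
    (∀ (u₁ u₂ : U) (v₁ v₂ : V),
      G (u₁ ⊗ₜ[R] v₁) (u₂ ⊗ₜ[R] v₂) + G (u₂ ⊗ₜ[R] v₂) (u₁ ⊗ₜ[R] v₁) =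
        γ u₁ u₂ * b v₁ v₂) ∧
    (∀ (u : U) (v : V), G (u ⊗ₜ[R] v) (u ⊗ₜ[R] v) = γ u u * q v) :=
  tensor_expansion_independent_general γ hγ q b B B' hBexp hBq hB'exp hB'q G G' hG hG'
end

section
/- Let (U, γ) be a free bilinear R-module with orthogonal decomposition U = ⊥_{i∈I} U_i, (V, q) a free quadratic R-module, and b a balanced companion of q. Then U ⊗_b V = ⊥_{i∈I} (U_i ⊗_b V) as quadratic modules, where U ⊗_b V carries the quadratic form γ ⊗_b q. -/
/-!
The decomposition `U = ⊥ Uᵢ` is governed by its projections `πᵢ : U → U`; the maps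
`πᵢ ⊗ id` restrict to the identity on `Uᵢ ⊗ V` and to zero on `Uⱼ ⊗ V` for `j ≠ i`, so
they read off the components of any decomposition of `U ⊗ V`, which gives uniqueness, while
existence holds because pure tensors span. On pure tensors `γ ⊗ B` factors through `γ`, so the
pieces `Uᵢ ⊗ V` are orthogonal for `γ ⊗ B` and the quadratic form is additive across them.
-/

open TensorProduct

/-- `V` is the internal direct sum of the family of submodules `W i`. -/
def IsInternalSum {R : Type*} [CommSemiring R] {V : Type*} [AddCommMonoid V] [Module R V]
    {ι : Type*} (W : ι → Submodule R V) : Prop :=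
  ∀ x : V, ∃! c : ι →₀ V, (∀ i, c i ∈ W i) ∧ x = c.sum fun _ v => v

namespace IsInternalSum

variable {R M ι : Type*} [CommSemiring R] [AddCommMonoid M] [Module R M]
  {W : ι → Submodule R M}

theorem iSup_eq_top (h : IsInternalSum W) : ⨆ i, W i = ⊤ :=
  eq_top_iff.2 fun x _ ↦ (Submodule.mem_iSup_iff_exists_finsupp W x).2 <|
    let ⟨c, ⟨hc, hx⟩, _⟩ := h x
    ⟨c, hc, hx.symm⟩

theorem eq_of_sum_eq (h : IsInternalSum W) {x : M} {c d : ι →₀ M} (hc : ∀ i, c i ∈ W i)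
    (hd : ∀ i, d i ∈ W i) (hcx : (c.sum fun _ v ↦ v) = x) (hdx : (d.sum fun _ v ↦ v) = x) :
    c = d :=
  (h x).unique ⟨hc, hcx.symm⟩ ⟨hd, hdx.symm⟩

theorem choose_mem (h : IsInternalSum W) (x : M) (i : ι) : (h x).choose i ∈ W i :=
  (h x).choose_spec.1.1 i

theorem sum_choose (h : IsInternalSum W) (x : M) : ((h x).choose.sum fun _ v ↦ v) = x :=
  (h x).choose_spec.1.2.symm

noncomputable def decomp (h : IsInternalSum W) : M →ₗ[R] ι →₀ M where
  toFun x := (h x).choose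
  map_add' x y := by
    refine h.eq_of_sum_eq (h.choose_mem _)
      (fun i ↦ add_mem (h.choose_mem x i) (h.choose_mem y i)) (h.sum_choose _) ?_
    rw [Finsupp.sum_add_index' (fun _ ↦ rfl) (fun _ _ _ ↦ rfl), h.sum_choose, h.sum_choose]
  map_smul' a x := by
    refine h.eq_of_sum_eq (h.choose_mem _)
      (fun i ↦ Submodule.smul_mem _ a (h.choose_mem x i)) (h.sum_choose _) ?_
    rw [Finsupp.sum_smul_index' (fun _ ↦ rfl), ← Finsupp.smul_sum, h.sum_choose,
      RingHom.id_apply]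

theorem decomp_of_mem (h : IsInternalSum W) {i : ι} {u : M} (hu : u ∈ W i) :
    h.decomp u = Finsupp.single i u := by
  classical
  refine h.eq_of_sum_eq (h.choose_mem u) (fun j ↦ ?_) (h.sum_choose u)
    (Finsupp.sum_single_index rfl)
  rw [Finsupp.single_apply]
  split_ifs with hij
  · exact hij ▸ hu
  · exact zero_mem _

noncomputable def proj (h : IsInternalSum W) (i : ι) : M →ₗ[R] M :=
  Finsupp.lapply i ∘ₗ h.decomp

theorem proj_of_mem (h : IsInternalSum W) {i : ι} {u : M} (hu : u ∈ W i) : h.proj i u = u := by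
  simp [proj, h.decomp_of_mem hu]

theorem proj_of_mem_of_ne (h : IsInternalSum W) {i j : ι} (hij : i ≠ j) {u : M} (hu : u ∈ W i) :
    h.proj j u = 0 := by
  simp [proj, h.decomp_of_mem hu, Finsupp.single_eq_of_ne' hij]

theorem inf_eq_bot (h : IsInternalSum W) {i j : ι} (hij : i ≠ j) : W i ⊓ W j = ⊥ :=
  eq_bot_iff.2 fun _ ⟨hzi, hzj⟩ ↦ (h.proj_of_mem hzi).symm.trans (h.proj_of_mem_of_ne hij.symm hzj)

end IsInternalSum

section Projections

variable {R M ι : Type*} [CommSemiring R] [AddCommMonoid M] [Module R M]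
  {W : ι → Submodule R M} (p : ι → M →ₗ[R] M)

theorem apply_sum_eq_of_projections (hp : ∀ i, ∀ z ∈ W i, p i z = z)
    (hp' : ∀ i j, i ≠ j → ∀ z ∈ W i, p j z = 0) {d : ι →₀ M} (hd : ∀ i, d i ∈ W i) (j : ι) :
    p j (d.sum fun _ v ↦ v) = d j := by
  classical
  rw [map_finsuppSum, ← Finsupp.sum_ite_self_eq' d j]
  refine Finsupp.sum_congr fun i _ ↦ ?_
  split_ifs with hij
  · exact hij ▸ hp j _ (hd j)
  · exact hp' i j hij _ (hd i)

theorem isInternalSum_of_projections (hp : ∀ i, ∀ z ∈ W i, p i z = z)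
    (hp' : ∀ i j, i ≠ j → ∀ z ∈ W i, p j z = 0) (htop : ⨆ i, W i = ⊤) : IsInternalSum W := by
  intro z
  obtain ⟨d, hd, hdz⟩ :=
    (Submodule.mem_iSup_iff_exists_finsupp W z).1 (htop ▸ Submodule.mem_top)
  refine ⟨d, ⟨hd, hdz.symm⟩, fun d' ⟨hd', hd'z⟩ ↦ Finsupp.ext fun j ↦ ?_⟩
  rw [← apply_sum_eq_of_projections p hp hp' hd, ← apply_sum_eq_of_projections p hp hp' hd',
    hdz, hd'z]

end Projections

theorem LinearMap.eq_zero_of_mem_span {R M N P : Type*} [CommSemiring R] [AddCommMonoid M]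
    [AddCommMonoid N] [AddCommMonoid P] [Module R M] [Module R N] [Module R P]
    (f : M →ₗ[R] N →ₗ[R] P) {s : Set M} {t : Set N} (hst : ∀ x ∈ s, ∀ y ∈ t, f x y = 0)
    {x : M} {y : N} (hx : x ∈ Submodule.span R s) (hy : y ∈ Submodule.span R t) :
    f x y = 0 := by
  have hxy := Submodule.apply_mem_map₂ f hx hy
  rw [Submodule.map₂_span_span] at hxy
  refine (Submodule.mem_bot R).1 (Submodule.span_le.2 ?_ hxy)
  rintro _ ⟨x, hx, y, hy, rfl⟩
  exact hst x hx y hy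

theorem LinearMap.apply_add_add_of_eq_zero {R M P : Type*} [CommSemiring R] [AddCommMonoid M]
    [AddCommMonoid P] [Module R M] [Module R P] (f : M →ₗ[R] M →ₗ[R] P) {x y : M}
    (hxy : f x y = 0) (hyx : f y x = 0) : f (x + y) (x + y) = f x x + f y y := by
  simp only [map_add, LinearMap.add_apply, hxy, hyx, add_zero, zero_add]

section TensorSpan

variable {R U V ι : Type*} [CommSemiring R] [AddCommMonoid U] [Module R U] [AddCommMonoid V]
  [Module R V]

variable (V) in
/-- The paper's `P ⊗ V`, taken as the span of its pure tensors inside `U ⊗ V`. -/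
def tensorSpan (P : Submodule R U) : Submodule R (U ⊗[R] V) :=
  Submodule.span R {z | ∃ u ∈ P, ∃ v : V, z = u ⊗ₜ[R] v}

theorem rTensor_eqOn_tensorSpan {P : Submodule R U} {f g : U →ₗ[R] U} (hfg : Set.EqOn f g P) :
    Set.EqOn (f.rTensor V) (g.rTensor V) (tensorSpan V P) := by
  refine LinearMap.eqOn_span' ?_
  rintro _ ⟨u, hu, v, rfl⟩
  simp only [LinearMap.rTensor_tmul, hfg hu]

theorem iSup_tensorSpan_eq_top {P : ι → Submodule R U} (hP : ⨆ i, P i = ⊤) :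
    ⨆ i, tensorSpan V (P i) = ⊤ := by
  rw [eq_top_iff, ← TensorProduct.span_tmul_eq_top, Submodule.span_le]
  rintro _ ⟨u, v, rfl⟩
  have hu : u ∈ ⨆ i, P i := hP ▸ Submodule.mem_top
  refine Submodule.iSup_induction P (motive := fun u ↦ u ⊗ₜ[R] v ∈ _) hu ?_ ?_ ?_
  · exact fun i u hu ↦ Submodule.mem_iSup_of_mem i (Submodule.subset_span ⟨u, hu, v, rfl⟩)
  · rw [zero_tmul]
    exact zero_mem _
  · intro u u' hu hu'
    rw [add_tmul]
    exact add_mem hu hu'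

theorem IsInternalSum.tensorSpan {P : ι → Submodule R U} (h : IsInternalSum P) :
    IsInternalSum fun i ↦ tensorSpan V (P i) := by
  refine isInternalSum_of_projections (fun i ↦ (h.proj i).rTensor V) (fun i z hz ↦ ?_)
    (fun i j hij z hz ↦ ?_) (iSup_tensorSpan_eq_top h.iSup_eq_top)
  · rw [rTensor_eqOn_tensorSpan (f := h.proj i) (g := LinearMap.id) (fun _ ↦ h.proj_of_mem) hz,
      LinearMap.rTensor_id, LinearMap.id_apply]
  · rw [rTensor_eqOn_tensorSpan (f := h.proj j) (g := 0) (fun _ ↦ h.proj_of_mem_of_ne hij) hz,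
      LinearMap.rTensor_zero, LinearMap.zero_apply]

theorem apply_eq_zero_of_mem_tensorSpan {γ : U →ₗ[R] U →ₗ[R] R} {B : V →ₗ[R] V →ₗ[R] R}
    {G : U ⊗[R] V →ₗ[R] U ⊗[R] V →ₗ[R] R}
    (hG : ∀ u₁ u₂ v₁ v₂, G (u₁ ⊗ₜ[R] v₁) (u₂ ⊗ₜ[R] v₂) = γ u₁ u₂ * B v₁ v₂)
    {P Q : Submodule R U} (hPQ : ∀ x ∈ P, ∀ y ∈ Q, γ x y = 0) {x y : U ⊗[R] V}
    (hx : x ∈ tensorSpan V P) (hy : y ∈ tensorSpan V Q) : G x y = 0 := by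
  refine G.eq_zero_of_mem_span ?_ hx hy
  rintro _ ⟨u, hu, v, rfl⟩ _ ⟨u', hu', v', rfl⟩
  rw [hG, hPQ u hu u' hu', zero_mul]

end TensorSpan

theorem tensor_orth_decomposition_general {R : Type*} [CommSemiring R]
    {U V : Type*} [AddCommMonoid U] [Module R U] [AddCommMonoid V] [Module R V]
    (γ : U →ₗ[R] U →ₗ[R] R)
    (B : V →ₗ[R] V →ₗ[R] R)
    (G : U ⊗[R] V →ₗ[R] U ⊗[R] V →ₗ[R] R)
    (hG : ∀ (u₁ u₂ : U) (v₁ v₂ : V),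
      G (u₁ ⊗ₜ[R] v₁) (u₂ ⊗ₜ[R] v₂) = γ u₁ u₂ * B v₁ v₂)
    (tq : U ⊗[R] V → R) (htq : ∀ z, tq z = G z z)
    {ι : Type*} (Usub : ι → Submodule R U)
    (horth : ∀ i j, i ≠ j → Usub i ⊓ Usub j = ⊥ ∧
      ∀ x ∈ Usub i, ∀ y ∈ Usub j, γ x y = 0)
    (hsum : IsInternalSum Usub)
    (W : ι → Submodule R (U ⊗[R] V))
    (hW : ∀ i, W i = Submodule.span R {z | ∃ u ∈ Usub i, ∃ v : V, z = u ⊗ₜ[R] v}) :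
    (∀ i j, i ≠ j → W i ⊓ W j = ⊥ ∧ QlinOn tq (W i : Set (U ⊗[R] V)) (W j : Set (U ⊗[R] V))) ∧
      IsInternalSum W := by
  obtain rfl : W = fun i ↦ tensorSpan V (Usub i) := funext hW
  have hWsum : IsInternalSum fun i ↦ tensorSpan V (Usub i) := hsum.tensorSpan
  refine ⟨fun i j hij ↦ ⟨hWsum.inf_eq_bot hij, fun x hx y hy ↦ ?_⟩, hWsum⟩
  have hxy := apply_eq_zero_of_mem_tensorSpan hG (horth i j hij).2 hx hy
  have hyx := apply_eq_zero_of_mem_tensorSpan hG (horth j i hij.symm).2 hy hx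
  rw [htq, htq, htq, G.apply_add_add_of_eq_zero hxy hyx]

/-- If the free bilinear module `(U, γ)` has an orthogonal decomposition
`U = ⊥_{i∈I} U_i`, `(V, q)` is a free quadratic module and `b` a balanced companion of `q`,
then `U ⊗_b V = ⊥_{i∈I} (U_i ⊗_b V)` as quadratic modules, where the quadratic form
`γ ⊗_b q` is induced by `γ ⊗ B` for an expansion `B` of `(q, b)`. -/
theorem tensor_orth_decomposition {R : Type*} [CommSemiring R]
    {U V : Type*} [AddCommMonoid U] [Module R U] [AddCommMonoid V] [Module R V]
    [Module.Free R U] [Module.Free R V]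
    (γ : U →ₗ[R] U →ₗ[R] R) (hγ : ∀ u u', γ u u' = γ u' u)
    (q : V → R) (b : V →ₗ[R] V →ₗ[R] R)
    (hqsmul : ∀ (a : R) (x : V), q (a • x) = a * a * q x)
    (hbsymm : ∀ x y, b x y = b y x)
    (hcomp : ∀ x y, q (x + y) = q x + q y + b x y)
    (hbal : ∀ x, b x x = 2 * q x)
    (B : V →ₗ[R] V →ₗ[R] R)
    (hBexp : ∀ x y, B x y + B y x = b x y) (hBq : ∀ x, B x x = q x)
    (G : U ⊗[R] V →ₗ[R] U ⊗[R] V →ₗ[R] R)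
    (hG : ∀ (u₁ u₂ : U) (v₁ v₂ : V),
      G (u₁ ⊗ₜ[R] v₁) (u₂ ⊗ₜ[R] v₂) = γ u₁ u₂ * B v₁ v₂)
    (tq : U ⊗[R] V → R) (htq : ∀ z, tq z = G z z)
    {ι : Type*} (Usub : ι → Submodule R U)
    (horth : ∀ i j, i ≠ j → Usub i ⊓ Usub j = ⊥ ∧
      ∀ x ∈ Usub i, ∀ y ∈ Usub j, γ x y = 0)
    (hsum : IsInternalSum Usub)
    (W : ι → Submodule R (U ⊗[R] V))
    (hW : ∀ i, W i = Submodule.span R {z | ∃ u ∈ Usub i, ∃ v : V, z = u ⊗ₜ[R] v}) :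
    (∀ i j, i ≠ j → W i ⊓ W j = ⊥ ∧ QlinOn tq (W i : Set (U ⊗[R] V)) (W j : Set (U ⊗[R] V))) ∧
      IsInternalSum W :=
  tensor_orth_decomposition_general γ B G hG tq htq Usub horth hsum W hW
end
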